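/- arXiv:1804.00170 — 2 statements merged into one kernel-verified Lean document; each statement's English description precedes it below -/
import Mathlib

section
/- Let N ≥ 1 be an integer and δ be a real number with 0 < |δ| ≤ 1/(2N). Then (1/N²)·|∑_{x=0}^{N-1} e^{2πi x δ}|² ≥ 4/π². -/
/-!
The sum is geometric with ratio `e^{2πiδ}`, so its modulus is the Dirichlet-kernel
quotient `|sin(πNδ)| / |sin(πδ)|`. For `0 < N|δ| ≤ 1/2`, Jordan's inequality
`sin x ≥ 2x/π` on `[0, π/2]` bounds the numerator below by `2N|δ|`, and `|sin x| ≤ |x|`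
bounds the denominator above by `π|δ|`, so the quotient is at least `2N/π`.
-/

open Complex Finset
open scoped Real

theorem norm_sum_range_exp_two_pi_I_mul (N : ℕ) {δ : ℝ} (hδ : Real.sin (π * δ) ≠ 0) :
    ‖∑ x ∈ range N, exp (2 * π * I * x * δ)‖ =
      |Real.sin (π * (N * δ))| / |Real.sin (π * δ)| := by
  have hpow (n : ℕ) : exp (2 * π * I * n * δ) = exp (I * (2 * π * δ : ℝ)) ^ n := by
    rw [← exp_nat_mul]
    push_cast
    ring_nf
  have hnorm (n : ℕ) :
      ‖exp (I * (2 * π * δ : ℝ)) ^ n - 1‖ = 2 * |Real.sin (π * (n * δ))| := by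
    rw [← hpow, show 2 * π * I * n * δ = I * (2 * π * (n * δ) : ℝ) by push_cast; ring,
      norm_exp_I_mul_ofReal_sub_one, norm_mul, Real.norm_eq_abs, Real.norm_eq_abs, abs_two]
    congr 3
    ring
  have hz : exp (I * (2 * π * δ : ℝ)) ≠ 1 := by
    intro h
    have h1 := hnorm 1
    rw [pow_one, h, sub_self, norm_zero, Nat.cast_one, one_mul] at h1
    exact hδ (abs_eq_zero.mp (by linarith))
  simp_rw [hpow]
  rw [geom_sum_eq hz, norm_div, hnorm, ← pow_one (exp _), hnorm]
  push_cast
  rw [one_mul, mul_div_mul_left _ _ two_ne_zero]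

theorem two_mul_div_pi_mul_abs_sin_le_abs_sin_nat_mul (N : ℕ) {t : ℝ}
    (hNt : N * |t| ≤ 1 / 2) :
    2 * N / π * |Real.sin (π * t)| ≤ |Real.sin (π * (N * t))| := by
  have heven (c : ℝ) : |Real.sin (π * (c * t))| = |Real.sin (π * (c * |t|))| := by
    rcases abs_cases t with ⟨h, -⟩ | ⟨h, -⟩ <;> simp [h, Real.sin_neg]
  have hπ := Real.pi_pos
  calc 2 * N / π * |Real.sin (π * t)|
      = 2 * N / π * |Real.sin (π * (1 * |t|))| := by rw [← heven, one_mul]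
    _ ≤ 2 * N / π * (π * |t|) := by
        gcongr
        rw [one_mul]
        exact Real.abs_sin_le_abs.trans_eq (abs_of_nonneg (by positivity))
    _ = 2 / π * (π * (N * |t|)) := by field_simp
    _ ≤ Real.sin (π * (N * |t|)) := Real.mul_le_sin (by positivity) (by nlinarith)
    _ ≤ |Real.sin (π * (N * t))| := (heven N).symm ▸ le_abs_self _

theorem stmt_1 (N : ℕ) (hN : 1 ≤ N) (δ : ℝ) (hδ : 0 < |δ|)
    (hδ' : |δ| ≤ 1 / (2 * N)) :
    4 / Real.pi ^ 2 ≤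
      (1 / (N : ℝ) ^ 2) *
        ‖∑ x ∈ Finset.range N,
          Complex.exp (2 * Real.pi * Complex.I * x * δ)‖ ^ 2 := by
  have hπ := Real.pi_pos
  have hN₀ : (0 : ℝ) < N := by exact_mod_cast hN
  have hNδ : N * |δ| ≤ 1 / 2 := by
    rw [le_div_iff₀ (by positivity)] at hδ'
    linarith
  have hδ₂ : |δ| ≤ 1 / 2 := by nlinarith [(by exact_mod_cast hN : (1 : ℝ) ≤ N)]
  have hsin : Real.sin (π * δ) ≠ 0 := by
    have hbound : |π * δ| < π := by
      rw [abs_mul, abs_of_pos hπ]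
      nlinarith
    rw [Ne, Real.sin_eq_zero_iff_of_lt_of_lt (neg_lt_of_abs_lt hbound) (lt_of_abs_lt hbound)]
    exact mul_ne_zero hπ.ne' (abs_pos.mp hδ)
  have hkernel : 2 * N / π ≤ ‖∑ x ∈ range N, exp (2 * π * I * x * δ)‖ := by
    rw [norm_sum_range_exp_two_pi_I_mul N hsin, le_div_iff₀ (abs_pos.mpr hsin)]
    exact two_mul_div_pi_mul_abs_sin_le_abs_sin_nat_mul N hNδ
  calc 4 / π ^ 2 = 1 / (N : ℝ) ^ 2 * (2 * N / π) ^ 2 := by field_simp; ring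
    _ ≤ _ := by gcongr
end

section
/- Let x ∈ ℂ^m be a nonzero vector with κ(x) = max_k |x_k| / min_{k, x_k≠0} |x_k|, and let q = ⌈log₂ κ(x)⌉ (or the minimal q with κ(x) ≤ 2^q). Partition the nonzero entries by dyadic magnitude: let y_j be the vector containing the entries of x whose absolute values lie in [2^{j−1}·μ, 2^j·μ) where μ = min_{k,x_k≠0}|x_k| (and the top interval closed). Then x = y_1 + ⋯ + y_q, each nonzero y_j satisfies κ(y_j) ≤ 2, and ∑_j ‖y_j‖₂ ≤ √q·‖x‖₂. -/
/-!
Every nonzero entry of `x` has magnitude in `[μ, 2^q μ]`, so it falls into exactly one of the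
`q` dyadic bands `[2^j μ, 2^(j+1) μ)` (the last one closed). Hence the `y j` have disjoint
supports covering that of `x`: they sum to `x` and `∑ ‖y j‖² = ‖x‖²`, and Cauchy–Schwarz over
the `q` bands gives `∑ ‖y j‖ ≤ √q ‖x‖`. Within one band the magnitudes differ by a factor of at
most `2`.
-/

def InDyadicBand (μ : ℝ) (q j : ℕ) (a : ℝ) : Prop :=
  2 ^ j * μ ≤ a ∧ (a < 2 ^ (j + 1) * μ ∨ j + 1 = q)

namespace InDyadicBand

-- Agrees with the instance of the unfolded conjunction, so `InDyadicBand` can replace it inside `if`.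
noncomputable instance (μ : ℝ) (q j : ℕ) (a : ℝ) : Decidable (InDyadicBand μ q j a) :=
  inferInstanceAs (Decidable (_ ∧ _))

variable {μ a b : ℝ} {q i j : ℕ}

theorem le_of_two_pow_mul_le (hμ : 0 ≤ μ) (hi : InDyadicBand μ q i a) (hj : j < q)
    (hja : 2 ^ j * μ ≤ a) : j ≤ i := by
  by_contra! hij
  rcases hi.2 with ha | hq
  · have : (2 : ℝ) ^ (i + 1) * μ ≤ 2 ^ j * μ := by gcongr <;> [norm_num; omega]
    linarith
  · omega

theorem existsUnique (hμ : 0 < μ) (hq : 1 ≤ q) (ha : μ ≤ a) :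
    ∃! j : Fin q, InDyadicBand μ q j a := by
  let P : ℕ → Prop := fun j => 2 ^ j * μ ≤ a
  let j₀ := Nat.findGreatest P (q - 1)
  have hj₀q : j₀ < q := by have := Nat.findGreatest_le (P := P) (q - 1); omega
  have hj₀ : InDyadicBand μ q j₀ a := by
    refine ⟨Nat.findGreatest_spec (P := P) (Nat.zero_le _) (by simpa [P] using ha), ?_⟩
    by_cases hlast : j₀ + 1 = q
    · exact Or.inr hlast
    · exact Or.inl (not_le.mp (Nat.findGreatest_is_greatest (Nat.lt_succ_self j₀) (by omega)))
  refine ⟨⟨j₀, hj₀q⟩, hj₀, fun j hj => Fin.ext (le_antisymm ?_ ?_)⟩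
  · exact le_of_two_pow_mul_le hμ.le hj₀ j.2 hj.1
  · exact le_of_two_pow_mul_le hμ.le hj hj₀q hj₀.1

theorem le_two_mul (ha : InDyadicBand μ q j a) (hb : InDyadicBand μ q j b)
    (haq : a ≤ 2 ^ q * μ) : a ≤ 2 * b := by
  have ha' : a ≤ 2 ^ (j + 1) * μ := by
    rcases ha.2 with h | h
    · exact h.le
    · rwa [h]
  calc a ≤ 2 ^ (j + 1) * μ := ha'
    _ = 2 * (2 ^ j * μ) := by ring
    _ ≤ 2 * b := by linarith [hb.1]

end InDyadicBand

theorem Fintype.sum_ite_eq_self_of_existsUnique {J M : Type*} [Fintype J] [AddCommMonoid M]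
    {P : J → Prop} [DecidablePred P] {a : M} (h : a ≠ 0 → ∃! j, P j) :
    ∑ j, (if P j then a else 0) = a := by
  by_cases ha : a = 0
  · simp [ha]
  obtain ⟨j₀, hj₀, huniq⟩ := h ha
  rw [Finset.sum_eq_single j₀ (fun j _ hj => if_neg (mt (huniq j) hj)) (by simp), if_pos hj₀]

namespace EuclideanSpace

variable {𝕜 ι J : Type*} [RCLike 𝕜] [Fintype J]
  {x : EuclideanSpace 𝕜 ι} {y : J → EuclideanSpace 𝕜 ι} {P : J → ι → Prop}
  [∀ j k, Decidable (P j k)]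

theorem sum_eq_of_existsUnique (hP : ∀ k, x k ≠ 0 → ∃! j, P j k)
    (hy : ∀ j k, y j k = if P j k then x k else 0) : ∑ j, y j = x := by
  ext k
  simp only [WithLp.ofLp_sum, Finset.sum_apply, hy]
  exact Fintype.sum_ite_eq_self_of_existsUnique (hP k)

theorem sum_norm_sq_eq_of_existsUnique [Fintype ι] (hP : ∀ k, x k ≠ 0 → ∃! j, P j k)
    (hy : ∀ j k, y j k = if P j k then x k else 0) : ∑ j, ‖y j‖ ^ 2 = ‖x‖ ^ 2 := by
  simp only [EuclideanSpace.norm_sq_eq, hy, apply_ite (‖·‖ ^ 2), norm_zero, ne_eq,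
    OfNat.ofNat_ne_zero, not_false_eq_true, zero_pow]
  rw [Finset.sum_comm]
  refine Finset.sum_congr rfl fun k _ => Fintype.sum_ite_eq_self_of_existsUnique fun hk => hP k ?_
  simpa using hk

end EuclideanSpace

theorem sum_norm_le_sqrt_card_mul_norm {J E : Type*} [Fintype J] [SeminormedAddCommGroup E]
    {y : J → E} {x : E} (h : ∑ j, ‖y j‖ ^ 2 = ‖x‖ ^ 2) :
    ∑ j, ‖y j‖ ≤ √(Fintype.card J) * ‖x‖ := by
  rw [← Real.sqrt_sq (norm_nonneg x), ← Real.sqrt_mul (Nat.cast_nonneg _), ← h]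
  refine Real.le_sqrt_of_sq_le ?_
  simpa using sq_sum_le_card_mul_sum_sq (s := Finset.univ) (f := fun j => ‖y j‖)

theorem stmt_11_general (m : ℕ) (x : EuclideanSpace ℂ (Fin m))
    (μ Kmax κ : ℝ)
    (hμlb : ∀ k, x k ≠ 0 → μ ≤ ‖x k‖)
    (hμmem : ∃ k, x k ≠ 0 ∧ ‖x k‖ = μ)
    (hKub : ∀ k, ‖x k‖ ≤ Kmax)
    (hκ : κ = Kmax / μ)
    (q : ℕ) (hq1 : 1 ≤ q) (hq : κ ≤ 2 ^ q)
    (y : Fin q → EuclideanSpace ℂ (Fin m))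
    (hy : ∀ j k, y j k =
      if 2 ^ (j : ℕ) * μ ≤ ‖x k‖ ∧
          (‖x k‖ < 2 ^ ((j : ℕ) + 1) * μ ∨ (j : ℕ) + 1 = q)
        then x k else 0) :
    x = ∑ j, y j ∧
    (∀ j k k', y j k ≠ 0 → y j k' ≠ 0 →
      ‖y j k‖ ≤ 2 * ‖y j k'‖) ∧
    (∑ j, ‖y j‖) ≤ Real.sqrt q * ‖x‖ := by
  have hμ : 0 < μ := by
    obtain ⟨k, hk, rfl⟩ := hμmem
    exact norm_pos_iff.mpr hk
  have hband : ∀ k, x k ≠ 0 → ∃! j : Fin q, InDyadicBand μ q j ‖x k‖ :=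
    fun k hk => InDyadicBand.existsUnique hμ hq1 (hμlb k hk)
  have hle : ∀ k, ‖x k‖ ≤ 2 ^ q * μ := fun k =>
    (hKub k).trans (by rwa [hκ, div_le_iff₀ hμ] at hq)
  refine ⟨(EuclideanSpace.sum_eq_of_existsUnique hband hy).symm, ?_, ?_⟩
  · intro j k k' hk hk'
    rw [hy] at hk hk'
    obtain ⟨hjk, -⟩ := ite_ne_right_iff.mp hk
    obtain ⟨hjk', -⟩ := ite_ne_right_iff.mp hk'
    rw [hy, hy, if_pos hjk, if_pos hjk']
    exact InDyadicBand.le_two_mul hjk hjk' (hle k)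
  · simpa using sum_norm_le_sqrt_card_mul_norm
      (EuclideanSpace.sum_norm_sq_eq_of_existsUnique hband hy)

/-- Dyadic decomposition for quantum state preparation: `μ` is the smallest absolute
value of a nonzero entry of `x`, `κ` the ratio of the largest to the smallest such
absolute value, `q` the minimal positive integer with `κ ≤ 2^q`, and `y j`
(for `j = 0, …, q-1`, representing the paper's `y_{j+1}`) keeps exactly the entries
of `x` with absolute value in `[2^j μ, 2^{j+1} μ)` (topmost interval closed).
Then `x = ∑ y j`, each `y j` has ratio of largest to smallest nonzero absolute value
at most `2`, and `∑ ‖y j‖ ≤ √q ‖x‖`. -/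
theorem stmt_11 (m : ℕ) (x : EuclideanSpace ℂ (Fin m)) (hx : x ≠ 0)
    (μ Kmax κ : ℝ)
    (hμlb : ∀ k, x k ≠ 0 → μ ≤ ‖x k‖)
    (hμmem : ∃ k, x k ≠ 0 ∧ ‖x k‖ = μ)
    (hKub : ∀ k, ‖x k‖ ≤ Kmax)
    (hKmem : ∃ k, x k ≠ 0 ∧ ‖x k‖ = Kmax)
    (hκ : κ = Kmax / μ)
    (q : ℕ) (hq1 : 1 ≤ q) (hq : κ ≤ 2 ^ q)
    (hqmin : ∀ p : ℕ, 1 ≤ p → κ ≤ 2 ^ p → q ≤ p)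
    (y : Fin q → EuclideanSpace ℂ (Fin m))
    (hy : ∀ j k, y j k =
      if 2 ^ (j : ℕ) * μ ≤ ‖x k‖ ∧
          (‖x k‖ < 2 ^ ((j : ℕ) + 1) * μ ∨ (j : ℕ) + 1 = q)
        then x k else 0) :
    x = ∑ j, y j ∧
    (∀ j k k', y j k ≠ 0 → y j k' ≠ 0 →
      ‖y j k‖ ≤ 2 * ‖y j k'‖) ∧
    (∑ j, ‖y j‖) ≤ Real.sqrt q * ‖x‖ :=
  stmt_11_general m x μ Kmax κ hμlb hμmem hKub hκ q hq1 hq y hy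
end
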